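/- arXiv:2311.08058 — 3 statements merged into one kernel-verified Lean document; each statement's English description precedes it below -/
import Mathlib

section
/- Let d ≥ 1, let μ be a Radon measure on ℝ^d that is absolutely continuous with respect to the Lebesgue measure 𝓛^d, let 1 ≤ p < ∞, and let p' be the Hölder conjugate of p. If (u_n) is a sequence in C¹_c(ℝ^d) such that u_n → 0 uniformly, the Lipschitz constants Lip(u_n) are uniformly bounded, and there is w ∈ L^p(μ; ℝ^d) such that ∫ ⟨∇u_n, φ⟩ dμ → ∫ ⟨w, φ⟩ dμ for every φ ∈ L^{p'}(μ; ℝ^d) (i.e. ∇u_n → w weakly in L^p(μ; ℝ^d)), then w = 0 μ-almost everywhere. (This is closability of the gradient from Lip(ℝ^d) to L^p(μ) endowed with the weak topology.) -/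
open MeasureTheory Filter Topology ENNReal NNReal RealInnerProductSpace

/-!
Testing the weak limit against `φ = g • v`, with `g` smooth and compactly supported, turns the
hypothesis into the convergence of `∫ ∂ᵥuₙ · g dμ = ∫ ∂ᵥuₙ · (ρ g) d𝓛`, where `ρ = dμ/d𝓛` and
`ρ g ∈ L¹(𝓛)`. The derivatives `∂ᵥuₙ` are bounded by `Lip(uₙ) ‖v‖`, so by density it suffices to
test them against smooth compactly supported functions `ψ`, and there, after an integration by
parts, `∫ ∂ᵥuₙ · ψ = -∫ uₙ · ∂ᵥψ → 0` because `uₙ → 0` uniformly. Hence `∫ g • w dμ = 0` for all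
such `g`, and `w = 0` μ-a.e. by the fundamental lemma of the calculus of variations.
-/

section

variable {α ι : Type*} [MeasurableSpace α] {μ : Measure α} {l : Filter ι}

lemma norm_integral_mul_le_of_ae_norm_le {f g : α → ℝ} {C : ℝ} (hf : ∀ᵐ x ∂μ, ‖f x‖ ≤ C)
    (hg : Integrable g μ) : ‖∫ x, f x * g x ∂μ‖ ≤ C * ∫ x, ‖g x‖ ∂μ := by
  rw [← integral_const_mul]
  refine norm_integral_le_of_norm_le (hg.norm.const_mul C) ?_
  filter_upwards [hf] with x hx
  rw [norm_mul]
  exact mul_le_mul_of_nonneg_right hx (norm_nonneg _)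

lemma tendsto_integral_mul_of_tendstoUniformly {u : ι → α → ℝ} (hu : TendstoUniformly u 0 l)
    {g : α → ℝ} (hg : Integrable g μ) : Tendsto (fun i ↦ ∫ x, u i x * g x ∂μ) l (𝓝 0) := by
  rw [NormedAddGroup.tendsto_nhds_zero]
  intro ε hε
  set I := ∫ x, ‖g x‖ ∂μ
  have hI : 0 ≤ I := integral_nonneg fun _ ↦ norm_nonneg _
  filter_upwards [Metric.tendstoUniformly_iff.1 hu (ε / (I + 1)) (by positivity)] with i hi
  have hbound : ∀ᵐ x ∂μ, ‖u i x‖ ≤ ε / (I + 1) := .of_forall fun x ↦ by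
    simpa [dist_eq_norm] using (hi x).le
  calc ‖∫ x, u i x * g x ∂μ‖ ≤ ε / (I + 1) * I := norm_integral_mul_le_of_ae_norm_le hbound hg
    _ < ε := by rw [div_mul_eq_mul_div, div_lt_iff₀ (by positivity)]; nlinarith

end

section

variable {E ι : Type*} [NormedAddCommGroup E] [NormedSpace ℝ E] [FiniteDimensional ℝ E]
  [MeasurableSpace E] [BorelSpace E] {l : Filter ι}

open scoped ContDiff in
lemma tendsto_integral_mul_of_forall_contDiff {μ : Measure E} [IsFiniteMeasureOnCompacts μ]
    {f : ι → E → ℝ} {C : ℝ≥0} (hf : ∀ i, AEStronglyMeasurable (f i) μ)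
    (hfC : ∀ i, ∀ᵐ x ∂μ, ‖f i x‖ ≤ C)
    (htest : ∀ ψ : E → ℝ, ContDiff ℝ ∞ ψ → HasCompactSupport ψ →
      Tendsto (fun i ↦ ∫ x, f i x * ψ x ∂μ) l (𝓝 0))
    {g : E → ℝ} (hg : Integrable g μ) : Tendsto (fun i ↦ ∫ x, f i x * g x ∂μ) l (𝓝 0) := by
  rw [NormedAddGroup.tendsto_nhds_zero]
  intro ε hε
  set δ := ε / (2 * (C + 1))
  obtain ⟨ψ, hψs, hψ, hgψ⟩ :=
    (memLp_one_iff_integrable.2 hg).exist_eLpNorm_sub_le one_ne_top le_rfl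
      (show 0 < δ by positivity)
  have hψi : Integrable ψ μ := hψ.continuous.integrable_of_hasCompactSupport hψs
  have hgψ_small : ∫ x, ‖(g - ψ) x‖ ∂μ ≤ δ := by
    rw [integral_norm_eq_lintegral_enorm (hg.sub hψi).aestronglyMeasurable,
      ← eLpNorm_one_eq_lintegral_enorm]
    exact ENNReal.toReal_le_of_le_ofReal (by positivity) hgψ
  filter_upwards [(NormedAddGroup.tendsto_nhds_zero.1 (htest ψ hψ hψs)) (ε / 2)
    (half_pos hε)] with i hi
  have hsplit : ∫ x, f i x * g x ∂μ = ∫ x, f i x * (g - ψ) x ∂μ + ∫ x, f i x * ψ x ∂μ := by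
    rw [← integral_add ((hg.sub hψi).bdd_mul (hf i) (hfC i)) (hψi.bdd_mul (hf i) (hfC i))]
    simp only [Pi.sub_apply, mul_sub, sub_add_cancel]
  have hCδ : (C : ℝ) * δ < ε / 2 := by
    rw [mul_div_assoc', div_lt_div_iff₀ (by positivity) two_pos]
    nlinarith [C.coe_nonneg]
  calc ‖∫ x, f i x * g x ∂μ‖
      ≤ ‖∫ x, f i x * (g - ψ) x ∂μ‖ + ‖∫ x, f i x * ψ x ∂μ‖ := hsplit ▸ norm_add_le _ _
    _ < ε / 2 + ε / 2 := by
      refine add_lt_add (lt_of_le_of_lt ?_ hCδ) hi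
      exact (norm_integral_mul_le_of_ae_norm_le (hfC i) (hg.sub hψi)).trans
        (mul_le_mul_of_nonneg_left hgψ_small C.coe_nonneg)
    _ = ε := add_halves ε

lemma tendsto_integral_fderiv_mul_of_tendstoUniformly {μ : Measure E} [μ.IsAddHaarMeasure]
    {u : ι → E → ℝ} (hu : ∀ i, ContDiff ℝ 1 (u i)) (hunif : TendstoUniformly u 0 l)
    {ψ : E → ℝ} (hψ : ContDiff ℝ 1 ψ) (hψs : HasCompactSupport ψ) (v : E) :
    Tendsto (fun i ↦ ∫ x, fderiv ℝ (u i) x v * ψ x ∂μ) l (𝓝 0) := by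
  have hderiv_cont : ∀ {f : E → ℝ}, ContDiff ℝ 1 f → Continuous fun x ↦ fderiv ℝ f x v :=
    fun hf ↦ (hf.continuous_fderiv one_ne_zero).clm_apply continuous_const
  have hibp : ∀ i, ∫ x, fderiv ℝ (u i) x v * ψ x ∂μ = -∫ x, u i x * fderiv ℝ ψ x v ∂μ := by
    intro i
    rw [integral_mul_fderiv_eq_neg_fderiv_mul_of_integrable
      (((hderiv_cont (hu i)).mul hψ.continuous).integrable_of_hasCompactSupport hψs.mul_left)
      (((hu i).continuous.mul (hderiv_cont hψ)).integrable_of_hasCompactSupport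
        (hψs.fderiv_apply ℝ v).mul_left)
      (((hu i).continuous.mul hψ.continuous).integrable_of_hasCompactSupport hψs.mul_left)
      (fun x _ ↦ (hu i).differentiable one_ne_zero x) (fun x _ ↦ hψ.differentiable one_ne_zero x),
      neg_neg]
  have hψ'_int : Integrable (fun x ↦ fderiv ℝ ψ x v) μ :=
    (hderiv_cont hψ).integrable_of_hasCompactSupport (hψs.fderiv_apply ℝ v)
  simpa only [hibp, neg_zero] using (tendsto_integral_mul_of_tendstoUniformly hunif hψ'_int).neg

theorem tendsto_integral_fderiv_mul_of_lipschitzWith {μ ν : Measure E} [ν.IsAddHaarMeasure]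
    [SigmaFinite μ] (hμν : μ ≪ ν) {u : ι → E → ℝ} (hu : ∀ i, ContDiff ℝ 1 (u i))
    (hunif : TendstoUniformly u 0 l) {L : ℝ≥0} (hL : ∀ i, LipschitzWith L (u i))
    {g : E → ℝ} (hg : Integrable g μ) (v : E) :
    Tendsto (fun i ↦ ∫ x, fderiv ℝ (u i) x v * g x ∂μ) l (𝓝 0) := by
  have hdensity : ∀ i, ∫ x, fderiv ℝ (u i) x v * g x ∂μ =
      ∫ x, fderiv ℝ (u i) x v * ((μ.rnDeriv ν x).toReal * g x) ∂ν := fun i ↦ by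
    rw [← integral_toReal_rnDeriv_mul hμν]
    congr 1 with x
    ring
  have hbound : ∀ i x, ‖fderiv ℝ (u i) x v‖ ≤ ((L * ‖v‖₊ : ℝ≥0) : ℝ) := fun i x ↦
    calc ‖fderiv ℝ (u i) x v‖ ≤ ‖fderiv ℝ (u i) x‖ * ‖v‖ := (fderiv ℝ (u i) x).le_opNorm v
      _ ≤ L * ‖v‖ := by gcongr; exact norm_fderiv_le_of_lipschitz ℝ (hL i)
      _ = ((L * ‖v‖₊ : ℝ≥0) : ℝ) := by push_cast; rfl
  simp only [hdensity]
  refine tendsto_integral_mul_of_forall_contDiff (fun i ↦ ?_) (fun i ↦ .of_forall (hbound i))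
    (fun ψ hψ hψs ↦ ?_) ((integrable_toReal_rnDeriv_mul_iff hμν).2 hg)
  · exact (((hu i).continuous_fderiv one_ne_zero).clm_apply continuous_const).aestronglyMeasurable
  · exact tendsto_integral_fderiv_mul_of_tendstoUniformly hu hunif (hψ.of_le (by simp)) hψs v

end

lemma inner_gradient_eq_fderiv {F : Type*} [NormedAddCommGroup F] [InnerProductSpace ℝ F]
    [CompleteSpace F] (f : F → ℝ) (x v : F) : ⟪gradient f x, v⟫ = fderiv ℝ f x v := by
  rw [← InnerProductSpace.toDual_apply_apply, toDual_gradient]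

theorem stmt1_general (d : ℕ)
    (μ : Measure (EuclideanSpace ℝ (Fin d))) [IsLocallyFiniteMeasure μ]
    (hμ : μ ≪ volume)
    (p p' : ℝ≥0∞) (hp : 1 ≤ p)
    (u : ℕ → EuclideanSpace ℝ (Fin d) → ℝ)
    (hu : ∀ n, ContDiff ℝ 1 (u n) ∧ HasCompactSupport (u n))
    (hunif : TendstoUniformly u 0 atTop)
    (L : ℝ≥0) (hL : ∀ n, LipschitzWith L (u n))
    (w : EuclideanSpace ℝ (Fin d) → EuclideanSpace ℝ (Fin d))
    (hw : MemLp w p μ)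
    (hweak : ∀ φ : EuclideanSpace ℝ (Fin d) → EuclideanSpace ℝ (Fin d),
      MemLp φ p' μ →
      Tendsto (fun n => ∫ x, ⟪gradient (u n) x, φ x⟫ ∂μ) atTop
        (𝓝 (∫ x, ⟪w x, φ x⟫ ∂μ))) :
    ∀ᵐ x ∂μ, w x = 0 := by
  have hw_loc : LocallyIntegrable w μ := hw.locallyIntegrable hp
  refine ae_eq_zero_of_integral_contDiff_smul_eq_zero hw_loc fun g hg hgs ↦ ?_
  set v := ∫ x, g x • w x ∂μ
  have hlim := hweak (fun x ↦ g x • v)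
    ((hg.continuous.smul continuous_const).memLp_of_hasCompactSupport hgs.smul_right)
  have hzero : Tendsto (fun n ↦ ∫ x, ⟪gradient (u n) x, g x • v⟫ ∂μ) atTop (𝓝 0) := by
    simpa only [real_inner_smul_right, inner_gradient_eq_fderiv, mul_comm] using
      tendsto_integral_fderiv_mul_of_lipschitzWith hμ (fun n ↦ (hu n).1) hunif hL
        (hg.continuous.integrable_of_hasCompactSupport hgs) v
  have hv : ⟪v, v⟫ = ∫ x, ⟪w x, g x • v⟫ ∂μ := by
    rw [real_inner_comm, ← integral_inner
      (hw_loc.integrable_smul_left_of_hasCompactSupport hg.continuous hgs)]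
    simp only [real_inner_smul_left, real_inner_smul_right, real_inner_comm]
  exact inner_self_eq_zero.1 (hv.trans (tendsto_nhds_unique hlim hzero))

/-- **Closability of the gradient from Lip to Lᵖ_w(μ) for μ ≪ Lebesgue, 1 ≤ p < ∞.**
If `μ ≪ 𝓛^d`, `uₙ ∈ C¹_c(ℝ^d)`, `uₙ → 0` uniformly with uniformly bounded Lipschitz
constants, and `∇uₙ → w` weakly in `Lᵖ(μ; ℝ^d)` (tested against all `φ ∈ L^{p'}(μ; ℝ^d)`,
`p'` the Hölder conjugate of `p`), then `w = 0` μ-a.e. -/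
theorem stmt1 (d : ℕ) (hd : 1 ≤ d)
    (μ : Measure (EuclideanSpace ℝ (Fin d))) [IsLocallyFiniteMeasure μ]
    (hμ : μ ≪ volume)
    (p p' : ℝ≥0∞) (hp : 1 ≤ p) (hptop : p ≠ ∞) (hpp' : p⁻¹ + p'⁻¹ = 1)
    (u : ℕ → EuclideanSpace ℝ (Fin d) → ℝ)
    (hu : ∀ n, ContDiff ℝ 1 (u n) ∧ HasCompactSupport (u n))
    (hunif : TendstoUniformly u 0 atTop)
    (L : ℝ≥0) (hL : ∀ n, LipschitzWith L (u n))
    (w : EuclideanSpace ℝ (Fin d) → EuclideanSpace ℝ (Fin d))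
    (hw : MemLp w p μ)
    (hweak : ∀ φ : EuclideanSpace ℝ (Fin d) → EuclideanSpace ℝ (Fin d),
      MemLp φ p' μ →
      Tendsto (fun n => ∫ x, ⟪gradient (u n) x, φ x⟫ ∂μ) atTop
        (𝓝 (∫ x, ⟪w x, φ x⟫ ∂μ))) :
    ∀ᵐ x ∂μ, w x = 0 :=
  stmt1_general d μ hμ p p' hp u hu hunif L hL w hw hweak
end

section
/- Let d ≥ 1 and let μ be a Radon measure on ℝ^d that is absolutely continuous with respect to the Lebesgue measure 𝓛^d. If (u_n) is a sequence in C¹_c(ℝ^d) such that u_n → 0 uniformly, the Lipschitz constants Lip(u_n) are uniformly bounded, and there is w ∈ L^∞(μ; ℝ^d) such that ∫ ⟨∇u_n, φ⟩ dμ → ∫ ⟨w, φ⟩ dμ for every φ ∈ L^1(μ; ℝ^d) (i.e. ∇u_n → w weakly* in L^∞(μ; ℝ^d)), then w = 0 μ-almost everywhere. (This is closability of the gradient from Lip(ℝ^d) to L^∞_w(μ).) -/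
/-!
Integrating by parts against a test field `ψ ∈ C¹_c`, `∫ ⟪∇uₙ, ψ⟫ = -∫ uₙ div ψ → 0` by uniform
convergence. The uniform Lipschitz bound makes `g ↦ ∫ ⟪∇uₙ, g⟫` uniformly `L¹`-bounded, so by
density of `C¹_c` in `L¹(𝓛^d)` the pairings tend to `0` for every `g ∈ L¹(𝓛^d)`. Writing
`μ = ρ 𝓛^d`, a field `φ ∈ L¹(μ)` becomes `ρ φ ∈ L¹(𝓛^d)`, hence `∫ ⟪w, φ⟫ dμ = 0` for all
`φ ∈ L¹(μ)`, and testing against `φ = 1_s w` on sets of finite measure gives `w = 0` μ-a.e.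
-/

open MeasureTheory Filter Topology ENNReal NNReal RealInnerProductSpace

theorem ae_eq_zero_of_forall_integral_inner_eq_zero {α F : Type*} [MeasurableSpace α]
    [NormedAddCommGroup F] [InnerProductSpace ℝ F] {μ : Measure α} [SigmaFinite μ] {w : α → F}
    (hw : MemLp w ∞ μ) (h : ∀ φ, Integrable φ μ → ∫ x, ⟪w x, φ x⟫ ∂μ = 0) : w =ᵐ[μ] 0 := by
  have hint : ∀ s, μ s < ∞ → Integrable w (μ.restrict s) := fun s hμs =>
    have := isFiniteMeasure_restrict.2 hμs.ne
    (hw.restrict s).integrable le_top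
  have hsq : (fun x => ‖w x‖ ^ 2) =ᵐ[μ] 0 := by
    refine ae_eq_zero_of_forall_setIntegral_eq_of_sigmaFinite (fun s _ hμs => ?_) fun s hs hμs => ?_
    · simp_rw [sq]
      exact (hint s hμs).norm.mul_of_top_left (hw.norm.restrict s)
    · rw [← h _ ((integrable_indicator_iff hs).2 (hint s hμs)), ← integral_indicator hs]
      congr 1 with x
      by_cases hx : x ∈ s <;> simp [hx]
  filter_upwards [hsq] with x hx
  simpa using hx

theorem tendsto_integral_mul_of_tendstoUniformly_zero {α ι : Type*} [MeasurableSpace α]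
    {μ : Measure α} {l : Filter ι} [l.IsCountablyGenerated] {u : ι → α → ℝ}
    (hu : TendstoUniformly u 0 l) (hum : ∀ i, AEStronglyMeasurable (u i) μ) {f : α → ℝ}
    (hf : Integrable f μ) : Tendsto (fun i => ∫ x, u i x * f x ∂μ) l (𝓝 0) := by
  have hbound : ∀ᶠ i in l, ∀ᵐ x ∂μ, ‖u i x * f x‖ ≤ ‖f x‖ := by
    filter_upwards [Metric.tendstoUniformly_iff.1 hu 1 one_pos] with i hi
    refine ae_of_all _ fun x => ?_
    have : ‖u i x‖ ≤ 1 := by simpa [dist_comm] using (hi x).le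
    simpa [norm_mul] using mul_le_mul_of_nonneg_right this (norm_nonneg (f x))
  simpa using tendsto_integral_filter_of_dominated_convergence _
    (Eventually.of_forall fun i => (hum i).mul hf.1) hbound hf.norm
    (ae_of_all _ fun x => (hu.tendsto_at x).mul_const (f x))

section

variable {E : Type*} [NormedAddCommGroup E] [InnerProductSpace ℝ E]

noncomputable def divergence (ψ : E → E) (x : E) : ℝ :=
  LinearMap.trace ℝ E (fderiv ℝ ψ x)

theorem divergence_eq_sum {ι : Type*} [Fintype ι] (b : OrthonormalBasis ι ℝ E) {ψ : E → E} {x : E}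
    (hψ : DifferentiableAt ℝ ψ x) :
    divergence ψ x = ∑ i, fderiv ℝ (fun y => ⟪b i, ψ y⟫) x (b i) := by
  rw [divergence, LinearMap.trace_eq_sum_inner _ b]
  refine Finset.sum_congr rfl fun i _ => ?_
  rw [fderiv_inner_apply ℝ (differentiableAt_const _) hψ]
  simp

theorem ContDiff.continuous_divergence [FiniteDimensional ℝ E] {ψ : E → E}
    (hψ : ContDiff ℝ 1 ψ) : Continuous (divergence ψ) :=
  (LinearMap.trace ℝ E ∘ₗ ContinuousLinearMap.coeLM ℝ).continuous_of_finiteDimensional.comp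
    (hψ.continuous_fderiv one_ne_zero)

theorem HasCompactSupport.divergence {ψ : E → E} (hψ : HasCompactSupport ψ) :
    HasCompactSupport (divergence ψ) :=
  (hψ.fderiv ℝ).comp_left (g := fun T : E →L[ℝ] E => LinearMap.trace ℝ E T) (map_zero _)

theorem inner_gradient_eq_fderiv_s2 [CompleteSpace E] (f : E → ℝ) (x y : E) :
    ⟪gradient f x, y⟫ = fderiv ℝ f x y :=
  InnerProductSpace.toDual_symm_apply

theorem LipschitzWith.norm_inner_gradient_le [CompleteSpace E] {f : E → ℝ} {L : ℝ≥0}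
    (hf : LipschitzWith L f) (x y : E) : ‖⟪gradient f x, y⟫‖ ≤ L * ‖y‖ := by
  refine (abs_real_inner_le_norm _ _).trans (mul_le_mul_of_nonneg_right ?_ (norm_nonneg y))
  rw [gradient, LinearIsometryEquiv.norm_map]
  exact norm_fderiv_le_of_lipschitz ℝ hf

theorem LipschitzWith.norm_integral_inner_gradient_le [CompleteSpace E] [MeasurableSpace E]
    {ν : Measure E} {f : E → ℝ} {L : ℝ≥0} (hf : LipschitzWith L f) {g : E → E}
    (hg : Integrable g ν) :
    ‖∫ x, ⟪gradient f x, g x⟫ ∂ν‖ ≤ L * ∫ x, ‖g x‖ ∂ν := by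
  rw [← integral_const_mul]
  exact norm_integral_le_of_norm_le (hg.norm.const_mul L)
    (ae_of_all _ fun x => hf.norm_inner_gradient_le x (g x))

variable [FiniteDimensional ℝ E] [MeasurableSpace E] [BorelSpace E]

theorem measurable_gradient (f : E → ℝ) : Measurable (gradient f) :=
  (InnerProductSpace.toDual ℝ E).symm.continuous.measurable.comp (measurable_fderiv ℝ f)

theorem LipschitzWith.integrable_inner_gradient {ν : Measure E} {f : E → ℝ} {L : ℝ≥0}
    (hf : LipschitzWith L f) {g : E → E} (hg : Integrable g ν) :
    Integrable (fun x => ⟪gradient f x, g x⟫) ν :=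
  (hg.norm.const_mul L).mono' ((measurable_gradient f).aestronglyMeasurable.inner hg.1)
    (ae_of_all _ fun x => hf.norm_inner_gradient_le x (g x))

theorem integral_inner_gradient_eq_neg_integral_mul_divergence (μ : Measure E)
    [μ.IsAddHaarMeasure] {u : E → ℝ} {ψ : E → E} (hu : ContDiff ℝ 1 u) (hψ : ContDiff ℝ 1 ψ)
    (hψc : HasCompactSupport ψ) :
    ∫ x, ⟪gradient u x, ψ x⟫ ∂μ = -∫ x, u x * divergence ψ x ∂μ := by
  set b := stdOrthonormalBasis ℝ E
  set ψ' : _ → E → ℝ := fun i x => ⟪b i, ψ x⟫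
  have hψ' : ∀ i, ContDiff ℝ 1 (ψ' i) := fun i => contDiff_const.inner ℝ hψ
  have hψ'c : ∀ i, HasCompactSupport (ψ' i) := fun i =>
    hψc.comp_left (g := fun v => ⟪b i, v⟫) (inner_zero_right _)
  have hDψ' : ∀ i, Continuous fun x => fderiv ℝ (ψ' i) x (b i) := fun i =>
    ((hψ' i).continuous_fderiv one_ne_zero).clm_apply continuous_const
  have hDu : ∀ i, Continuous fun x => fderiv ℝ u x (b i) := fun i =>
    (hu.continuous_fderiv one_ne_zero).clm_apply continuous_const
  have expand_inner : ∀ x, ⟪gradient u x, ψ x⟫ = ∑ i, ψ' i x * fderiv ℝ u x (b i) := fun x => by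
    simp_rw [← b.sum_inner_mul_inner (gradient u x) (ψ x), inner_gradient_eq_fderiv_s2, mul_comm]
    rfl
  have expand_div : ∀ x, u x * divergence ψ x = ∑ i, fderiv ℝ (ψ' i) x (b i) * u x := fun x => by
    rw [divergence_eq_sum b (hψ.differentiable one_ne_zero x), Finset.mul_sum]
    simp_rw [mul_comm (u x)]
    rfl
  have hint_u' : ∀ i, Integrable (fun x => ψ' i x * fderiv ℝ u x (b i)) μ := fun i =>
    ((hψ' i).continuous.mul (hDu i)).integrable_of_hasCompactSupport (hψ'c i).mul_right
  have hint_ψ' : ∀ i, Integrable (fun x => fderiv ℝ (ψ' i) x (b i) * u x) μ := fun i =>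
    ((hDψ' i).mul hu.continuous).integrable_of_hasCompactSupport
      ((hψ'c i).fderiv_apply (𝕜 := ℝ) (b i)).mul_right
  have ibp : ∀ i,
      ∫ x, ψ' i x * fderiv ℝ u x (b i) ∂μ = -∫ x, fderiv ℝ (ψ' i) x (b i) * u x ∂μ := fun i =>
    integral_mul_fderiv_eq_neg_fderiv_mul_of_integrable (hint_ψ' i) (hint_u' i)
      (((hψ' i).continuous.mul hu.continuous).integrable_of_hasCompactSupport (hψ'c i).mul_right)
      (fun x _ => (hψ' i).differentiable one_ne_zero x) (fun x _ => hu.differentiable one_ne_zero x)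
  simp_rw [expand_inner, expand_div]
  rw [integral_finsetSum _ fun i _ => hint_u' i, integral_finsetSum _ fun i _ => hint_ψ' i,
    ← Finset.sum_neg_distrib]
  exact Finset.sum_congr rfl fun i _ => ibp i

theorem tendsto_integral_inner_gradient_of_contDiff (μ : Measure E) [μ.IsAddHaarMeasure]
    {ι : Type*} {l : Filter ι} [l.IsCountablyGenerated] {u : ι → E → ℝ}
    (hu : ∀ i, ContDiff ℝ 1 (u i)) (hunif : TendstoUniformly u 0 l) {ψ : E → E}
    (hψ : ContDiff ℝ 1 ψ) (hψc : HasCompactSupport ψ) :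
    Tendsto (fun i => ∫ x, ⟪gradient (u i) x, ψ x⟫ ∂μ) l (𝓝 0) := by
  simp_rw [integral_inner_gradient_eq_neg_integral_mul_divergence μ (hu _) hψ hψc]
  simpa using (tendsto_integral_mul_of_tendstoUniformly_zero hunif
    (fun i => (hu i).continuous.aestronglyMeasurable)
    (hψ.continuous_divergence.integrable_of_hasCompactSupport hψc.divergence)).neg

theorem tendsto_integral_inner_gradient_of_integrable (μ : Measure E) [μ.IsAddHaarMeasure]
    {ι : Type*} {l : Filter ι} [l.IsCountablyGenerated] {u : ι → E → ℝ}
    (hu : ∀ i, ContDiff ℝ 1 (u i)) (hunif : TendstoUniformly u 0 l) {L : ℝ≥0}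
    (hL : ∀ i, LipschitzWith L (u i)) {g : E → E} (hg : Integrable g μ) :
    Tendsto (fun i => ∫ x, ⟪gradient (u i) x, g x⟫ ∂μ) l (𝓝 0) := by
  refine Metric.tendsto_nhds.2 fun ε hε => ?_
  obtain ⟨ψ, hψc, hψ, hgψ_eLpNorm⟩ := (memLp_one_iff_integrable.2 hg).exist_eLpNorm_sub_le
    one_ne_top le_rfl (ε := ε / (2 * (L + 1))) (by positivity)
  have hψi : Integrable ψ μ := hψ.continuous.integrable_of_hasCompactSupport hψc
  have hgψ : ∫ x, ‖(g - ψ) x‖ ∂μ ≤ ε / (2 * (L + 1)) := by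
    rw [integral_norm_eq_lintegral_enorm (hg.sub hψi).1, ← eLpNorm_one_eq_lintegral_enorm]
    exact ENNReal.toReal_le_of_le_ofReal (by positivity) hgψ_eLpNorm
  have hsmall : L * (ε / (2 * (L + 1))) < ε / 2 := by
    rw [mul_div_assoc', div_lt_iff₀ (by positivity)]
    nlinarith [L.coe_nonneg]
  filter_upwards [Metric.tendsto_nhds.1 (tendsto_integral_inner_gradient_of_contDiff μ hu hunif
    (hψ.of_le (mod_cast le_top)) hψc) (ε / 2) (half_pos hε)] with i hi
  have hsplit : ∫ x, ⟪gradient (u i) x, g x⟫ ∂μ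
      = ∫ x, ⟪gradient (u i) x, (g - ψ) x⟫ ∂μ + ∫ x, ⟪gradient (u i) x, ψ x⟫ ∂μ := by
    rw [← integral_add ((hL i).integrable_inner_gradient (hg.sub hψi))
      ((hL i).integrable_inner_gradient hψi)]
    simp [inner_sub_right]
  rw [dist_zero_right] at hi ⊢
  calc ‖∫ x, ⟪gradient (u i) x, g x⟫ ∂μ‖
      ≤ L * ∫ x, ‖(g - ψ) x‖ ∂μ + ‖∫ x, ⟪gradient (u i) x, ψ x⟫ ∂μ‖ := by
        rw [hsplit]
        exact (norm_add_le _ _).trans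
          (add_le_add_left ((hL i).norm_integral_inner_gradient_le (hg.sub hψi)) _)
    _ < ε / 2 + ε / 2 := by
        gcongr
        exact (mul_le_mul_of_nonneg_left hgψ L.coe_nonneg).trans_lt hsmall
    _ = ε := add_halves ε

theorem tendsto_integral_inner_gradient_of_absolutelyContinuous {μ ν : Measure E}
    [ν.IsAddHaarMeasure] [SigmaFinite μ] (hμν : μ ≪ ν) {ι : Type*} {l : Filter ι}
    [l.IsCountablyGenerated] {u : ι → E → ℝ} (hu : ∀ i, ContDiff ℝ 1 (u i))
    (hunif : TendstoUniformly u 0 l) {L : ℝ≥0} (hL : ∀ i, LipschitzWith L (u i)) {φ : E → E}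
    (hφ : Integrable φ μ) : Tendsto (fun i => ∫ x, ⟪gradient (u i) x, φ x⟫ ∂μ) l (𝓝 0) := by
  refine (tendsto_integral_inner_gradient_of_integrable ν hu hunif hL
    ((integrable_rnDeriv_smul_iff hμν).2 hφ)).congr fun i => ?_
  simp_rw [real_inner_smul_right, ← smul_eq_mul]
  exact integral_rnDeriv_smul hμν

end

theorem stmt2_general (d : ℕ)
    (μ : Measure (EuclideanSpace ℝ (Fin d))) [IsLocallyFiniteMeasure μ]
    (hμ : μ ≪ volume)
    (u : ℕ → EuclideanSpace ℝ (Fin d) → ℝ)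
    (hu : ∀ n, ContDiff ℝ 1 (u n) ∧ HasCompactSupport (u n))
    (hunif : TendstoUniformly u 0 atTop)
    (L : ℝ≥0) (hL : ∀ n, LipschitzWith L (u n))
    (w : EuclideanSpace ℝ (Fin d) → EuclideanSpace ℝ (Fin d))
    (hw : MemLp w ∞ μ)
    (hweak : ∀ φ : EuclideanSpace ℝ (Fin d) → EuclideanSpace ℝ (Fin d),
      Integrable φ μ →
      Tendsto (fun n => ∫ x, ⟪gradient (u n) x, φ x⟫ ∂μ) atTop
        (𝓝 (∫ x, ⟪w x, φ x⟫ ∂μ))) :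
    ∀ᵐ x ∂μ, w x = 0 := by
  refine ae_eq_zero_of_forall_integral_inner_eq_zero hw fun φ hφ => ?_
  exact tendsto_nhds_unique (hweak φ hφ)
    (tendsto_integral_inner_gradient_of_absolutelyContinuous hμ (fun n => (hu n).1) hunif hL hφ)

/-- **Closability of the gradient from Lip to L^∞_w(μ) for μ ≪ Lebesgue.**
If `μ ≪ 𝓛^d`, `uₙ ∈ C¹_c(ℝ^d)`, `uₙ → 0` uniformly with uniformly bounded Lipschitz
constants, and `∇uₙ → w` weakly* in `L^∞(μ; ℝ^d)` (tested against all `φ ∈ L¹(μ; ℝ^d)`),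
then `w = 0` μ-a.e. -/
theorem stmt2 (d : ℕ) (hd : 1 ≤ d)
    (μ : Measure (EuclideanSpace ℝ (Fin d))) [IsLocallyFiniteMeasure μ]
    (hμ : μ ≪ volume)
    (u : ℕ → EuclideanSpace ℝ (Fin d) → ℝ)
    (hu : ∀ n, ContDiff ℝ 1 (u n) ∧ HasCompactSupport (u n))
    (hunif : TendstoUniformly u 0 atTop)
    (L : ℝ≥0) (hL : ∀ n, LipschitzWith L (u n))
    (w : EuclideanSpace ℝ (Fin d) → EuclideanSpace ℝ (Fin d))
    (hw : MemLp w ∞ μ)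
    (hweak : ∀ φ : EuclideanSpace ℝ (Fin d) → EuclideanSpace ℝ (Fin d),
      Integrable φ μ →
      Tendsto (fun n => ∫ x, ⟪gradient (u n) x, φ x⟫ ∂μ) atTop
        (𝓝 (∫ x, ⟪w x, φ x⟫ ∂μ))) :
    ∀ᵐ x ∂μ, w x = 0 :=
  stmt2_general d μ hμ u hu hunif L hL w hw hweak
end

section
/- Let K ⊂ ℝ be a compact, totally disconnected set with positive Lebesgue measure, and let μ be the restriction of the Lebesgue measure 𝓛^1 to K. Then for every 1 ≤ p, q ≤ ∞ the derivative operator u ↦ u' on C¹_c(ℝ) is not closable from L^q(μ) to L^p(μ): there exist a sequence (u_n) in C¹_c(ℝ) and w ∈ L^p(μ) with w ≠ 0 on a set of positive μ-measure, such that u_n → 0 in L^q(μ) and u_n' → w in L^p(μ). -/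
/-!
Since `K` is compact with empty interior, for every `δ > 0` there are points
`s₀ < s₁ < ⋯ < s_N` outside `K`, with gaps at most `δ` and `K ⊆ (s₀, s_N)`. On each gap take a
smooth cutoff `χᵢ` supported in `(sᵢ, sᵢ₊₁)` and equal to `1` near `K`; then
`u = ∑ (x - sᵢ) χᵢ(x)` is smooth with compact support, `|u| ≤ δ`, and `u = x - sᵢ` near each point
of `K ∩ (sᵢ, sᵢ₊₁)`, so `u' = 1` on `K`. With `δ = 1/(n+1)` this gives `uₙ → 0` uniformly, hence
in every `L^q(μ)`, while `uₙ' = 1` holds `μ`-a.e.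
-/

open MeasureTheory Filter Topology ENNReal NNReal
open Set Function
open scoped ContDiff Manifold

theorem IsTotallyDisconnected.dense_compl {α : Type*} [ConditionallyCompleteLinearOrder α]
    [TopologicalSpace α] [OrderTopology α] [DenselyOrdered α] [Nontrivial α] {K : Set α}
    (hK : IsTotallyDisconnected K) : Dense Kᶜ := by
  refine dense_iff_exists_between.2 fun c d hcd => ?_
  obtain ⟨x, hcx, hxd⟩ := exists_between hcd
  obtain ⟨y, hxy, hyd⟩ := exists_between hxd
  by_cases hx : x ∈ K
  · by_cases hy : y ∈ K
    · obtain ⟨z, hzK, hz⟩ := isTotallyDisconnected_iff_lt.1 hK x hx y hy hxy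
      exact ⟨z, hzK, hcx.trans hz.1, hz.2.trans hyd⟩
    · exact ⟨y, hy, hcx.trans hxy, hyd⟩
  · exact ⟨x, hx, hcx, hxd⟩

theorem exists_strictMono_notMem_of_dense_compl {K : Set ℝ} (hKb : Bornology.IsBounded K)
    (hK : Dense Kᶜ) {δ : ℝ} (hδ : 0 < δ) :
    ∃ (s : ℕ → ℝ) (N : ℕ), StrictMono s ∧ (∀ i, s i ∉ K) ∧ (∀ i, s (i + 1) - s i ≤ δ) ∧
      K ⊆ Ioo (s 0) (s N) := by
  obtain ⟨a, ha⟩ := hKb.bddBelow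
  obtain ⟨b, hb⟩ := hKb.bddAbove
  have hwindow (i : ℕ) :
      ∃ t ∈ Kᶜ, t ∈ Ioo (a - δ / 2 + i * (δ / 2)) (a - δ / 2 + i * (δ / 2) + δ / 4) :=
    hK.exists_between (by linarith)
  choose s hsK hs using hwindow
  obtain ⟨N, hN⟩ := exists_nat_gt ((b - a) / (δ / 2) + 1)
  have hNδ : b - a + δ / 2 < N * (δ / 2) := by
    rw [div_add_one (by positivity), div_lt_iff₀ (by positivity)] at hN
    linarith
  have hgap : ∀ i : ℕ, s i < s (i + 1) ∧ s (i + 1) - s i ≤ δ := fun i => by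
    have hi := hs i
    have hi' := hs (i + 1)
    have hstep : ((i + 1 : ℕ) : ℝ) * (δ / 2) = i * (δ / 2) + δ / 2 := by push_cast; ring
    rw [hstep] at hi'
    constructor <;> linarith [hi.1, hi.2, hi'.1, hi'.2]
  refine ⟨s, N, strictMono_nat_of_lt_succ fun i => (hgap i).1, hsK, fun i => (hgap i).2,
    fun x hx => ⟨?_, ?_⟩⟩
  · linarith [(hs 0).2, ha hx, show ((0 : ℕ) : ℝ) * (δ / 2) = 0 by simp]
  · linarith [(hs N).1, hb hx]

theorem exists_lt_lt_succ_of_forall_ne {α : Type*} [LinearOrder α] {s : ℕ → α} {x : α}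
    (hx : ∀ i, s i ≠ x) (h0 : s 0 < x) : ∀ {N : ℕ}, x < s N → ∃ i < N, s i < x ∧ x < s (i + 1)
  | 0, hN => absurd h0 hN.not_gt
  | N + 1, hN => by
    rcases lt_or_gt_of_ne (hx N) with hlt | hgt
    · exact ⟨N, N.lt_succ_self, hlt, hN⟩
    · obtain ⟨i, hi, h⟩ := exists_lt_lt_succ_of_forall_ne hx h0 hgt
      exact ⟨i, hi.trans N.lt_succ_self, h⟩

theorem Finset.sum_apply_eq_of_support_subset {ι α M : Type*} [AddCommMonoid M]
    {I : ι → Set α} (hI : Pairwise (Disjoint on I)) {f : ι → α → M} (hf : ∀ i, support (f i) ⊆ I i)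
    {s : Finset ι} {i : ι} (hi : i ∈ s) {x : α} (hx : x ∈ I i) : ∑ j ∈ s, f j x = f i x :=
  Finset.sum_eq_single_of_mem i hi fun j _ hji =>
    notMem_support.1 fun h => Set.disjoint_left.1 (hI hji) (hf j h) hx

theorem exists_contDiff_eventuallyEq_sub_of_subset_Ioo {K : Set ℝ} (hK : IsClosed K) {a b : ℝ}
    (hab : a ≤ b) (hKab : K ⊆ Ioo a b) :
    ∃ v : ℝ → ℝ, ContDiff ℝ ∞ v ∧ support v ⊆ Ioo a b ∧ (∀ᶠ x in 𝓝ˢ K, v x = x - a) ∧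
      ∀ x, |v x| ≤ b - a := by
  obtain ⟨χ, hχK, hχab, hχ01⟩ := exists_contMDiffMap_one_nhds_of_subset_interior 𝓘(ℝ, ℝ) hK
    (t := Ioo a b) (by rwa [interior_Ioo]) (n := ⊤)
  refine ⟨fun x => (x - a) * χ x, (contDiff_id.sub contDiff_const).mul
    (contMDiff_iff_contDiff.1 χ.contMDiff), fun x hx => ?_, ?_, fun x => ?_⟩
  · by_contra h
    exact hx (by simp [hχab x h])
  · filter_upwards [hχK] with x hx
    simp [hx]
  · by_cases hx : x ∈ Ioo a b
    · rw [abs_mul, abs_of_nonneg (hχ01 x).1, abs_of_pos (sub_pos.2 hx.1)]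
      exact (mul_le_of_le_one_right (sub_nonneg.2 hx.1.le) (hχ01 x).2).trans
        (by linarith [hx.2])
    · simp [hχab x hx, hab]

theorem exists_contDiff_hasDerivAt_one_of_dense_compl {K : Set ℝ} (hKc : IsCompact K)
    (hK : Dense Kᶜ) {δ : ℝ} (hδ : 0 < δ) :
    ∃ u : ℝ → ℝ, ContDiff ℝ ∞ u ∧ HasCompactSupport u ∧ (∀ x ∈ K, HasDerivAt u 1 x) ∧
      ∀ x, |u x| ≤ δ := by
  obtain ⟨s, N, hs, hsK, hgap, hKs⟩ :=
    exists_strictMono_notMem_of_dense_compl hKc.isBounded hK hδ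
  have hpiece (i : ℕ) : ∃ v : ℝ → ℝ, ContDiff ℝ ∞ v ∧ support v ⊆ Ioo (s i) (s (i + 1)) ∧
      (∀ᶠ x in 𝓝ˢ (K ∩ Icc (s i) (s (i + 1))), v x = x - s i) ∧
      ∀ x, |v x| ≤ s (i + 1) - s i := by
    refine exists_contDiff_eventuallyEq_sub_of_subset_Ioo (hKc.isClosed.inter isClosed_Icc)
      (hs.monotone i.le_succ) fun x ⟨hxK, hx⟩ => ⟨hx.1.lt_of_ne ?_, hx.2.lt_of_ne ?_⟩
    · rintro rfl; exact hsK i hxK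
    · rintro rfl; exact hsK (i + 1) hxK
  choose v hv_smooth hv_supp hv_eq hv_bound using hpiece
  have hsum {i x} (hi : i ∈ Finset.range N) (hx : x ∈ Ioo (s i) (s (i + 1))) :
      ∑ j ∈ Finset.range N, v j x = v i x :=
    Finset.sum_apply_eq_of_support_subset hs.monotone.pairwise_disjoint_on_Ioo_succ hv_supp hi hx
  have hsum_zero {x} (hx : ∀ i ∈ Finset.range N, x ∉ Ioo (s i) (s (i + 1))) :
      ∑ j ∈ Finset.range N, v j x = 0 :=
    Finset.sum_eq_zero fun i hi => notMem_support.1 fun h => hx i hi (hv_supp i h)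
  refine ⟨fun x => ∑ i ∈ Finset.range N, v i x, ContDiff.sum fun i _ => hv_smooth i,
    HasCompactSupport.intro (isCompact_Icc (a := s 0) (b := s N)) fun x hx =>
      hsum_zero fun i hi hxi => hx ?_,
    fun x hx => ?_, fun x => ?_⟩
  · exact ⟨(hs.monotone (Nat.zero_le i)).trans hxi.1.le,
      hxi.2.le.trans (hs.monotone (Finset.mem_range.1 hi))⟩
  · obtain ⟨i, hiN, hi⟩ := exists_lt_lt_succ_of_forall_ne (s := s)
      (fun i h => hsK i (h ▸ hx)) (hKs hx).1 (hKs hx).2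
    have hxi : x ∈ K ∩ Icc (s i) (s (i + 1)) := ⟨hx, hi.1.le, hi.2.le⟩
    have hloc : (fun y => ∑ j ∈ Finset.range N, v j y) =ᶠ[𝓝 x] fun y => y - s i := by
      filter_upwards [isOpen_Ioo.mem_nhds hi,
        (hv_eq i).filter_mono (nhds_le_nhdsSet hxi)] with y hy hvy
      rw [hsum (Finset.mem_range.2 hiN) hy, hvy]
    exact ((hasDerivAt_id x).sub_const (s i)).congr_of_eventuallyEq hloc
  · show |∑ j ∈ Finset.range N, v j x| ≤ δ
    by_cases h : ∃ i ∈ Finset.range N, x ∈ Ioo (s i) (s (i + 1))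
    · obtain ⟨i, hi, hx⟩ := h
      rw [hsum hi hx]
      exact (hv_bound i x).trans (hgap i)
    · push Not at h
      rw [hsum_zero h, abs_zero]
      exact hδ.le

theorem tendsto_eLpNorm_zero_of_norm_le {α E ι : Type*} [MeasurableSpace α] {μ : Measure α}
    [IsFiniteMeasure μ] [NormedAddCommGroup E] {l : Filter ι} {f : ι → α → E} {C : ι → ℝ}
    (hf : ∀ i x, ‖f i x‖ ≤ C i) (hC : Tendsto C l (𝓝 0)) (p : ℝ≥0∞) :
    Tendsto (fun i => eLpNorm (f i) p μ) l (𝓝 0) := by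
  have hlim : Tendsto (fun i => μ univ ^ p.toReal⁻¹ * ENNReal.ofReal (C i)) l (𝓝 0) := by
    simpa using ENNReal.Tendsto.const_mul (ENNReal.tendsto_ofReal hC)
      (Or.inr (by finiteness))
  exact tendsto_of_tendsto_of_tendsto_of_le_of_le tendsto_const_nhds hlim (fun _ => zero_le)
    fun i => eLpNorm_le_of_ae_bound (ae_of_all _ (hf i))

theorem stmt15_general (K : Set ℝ) (hKc : IsCompact K) (hKtd : IsTotallyDisconnected K)
    (hKpos : 0 < volume K)
    (μ : Measure ℝ) (hμ : μ = volume.restrict K)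
    (p q : ℝ≥0∞) :
    ∃ (u : ℕ → ℝ → ℝ) (w : ℝ → ℝ),
      (∀ n, ContDiff ℝ 1 (u n) ∧ HasCompactSupport (u n)) ∧
      MemLp w p μ ∧ 0 < μ {x | w x ≠ 0} ∧
      Tendsto (fun n => eLpNorm (u n) q μ) atTop (𝓝 0) ∧
      Tendsto (fun n => eLpNorm (fun x => deriv (u n) x - w x) p μ) atTop (𝓝 0) := by
  subst hμ
  have : IsFiniteMeasure (volume.restrict K) := isFiniteMeasure_restrict.2 hKc.measure_lt_top.ne
  choose u hu_smooth hu_supp hu_deriv hu_bound using fun n : ℕ =>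
    exists_contDiff_hasDerivAt_one_of_dense_compl hKc hKtd.dense_compl
      (Nat.one_div_pos_of_nat (n := n))
  have hu_deriv_ae (n : ℕ) : (fun x => deriv (u n) x - 1) =ᵐ[volume.restrict K] 0 :=
    (ae_restrict_mem hKc.measurableSet).mono fun x hx => by simp [(hu_deriv n x hx).deriv]
  refine ⟨u, fun _ => 1, fun n => ⟨(hu_smooth n).of_le (by simp), hu_supp n⟩, memLp_const 1,
    by simpa using hKpos, tendsto_eLpNorm_zero_of_norm_le (fun n x => hu_bound n x)
      tendsto_one_div_add_atTop_nhds_zero_nat q, ?_⟩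
  simp [eLpNorm_congr_ae (hu_deriv_ae _)]

/-- **Non-closability of the derivative over a totally disconnected set of positive
measure.** Let `K ⊂ ℝ` be compact, totally disconnected, of positive Lebesgue measure,
and let `μ = 𝓛¹ ⌞ K`. Then for all `1 ≤ p, q ≤ ∞` the derivative is not closable from
`L^q(μ)` to `Lᵖ(μ)`: there are `uₙ ∈ C¹_c(ℝ)` and `w ∈ Lᵖ(μ)` nonzero on a set of
positive μ-measure with `uₙ → 0` in `L^q(μ)` and `uₙ' → w` in `Lᵖ(μ)`. -/
theorem stmt15 (K : Set ℝ) (hKc : IsCompact K) (hKtd : IsTotallyDisconnected K)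
    (hKpos : 0 < volume K)
    (μ : Measure ℝ) (hμ : μ = volume.restrict K)
    (p q : ℝ≥0∞) (hp : 1 ≤ p) (hq : 1 ≤ q) :
    ∃ (u : ℕ → ℝ → ℝ) (w : ℝ → ℝ),
      (∀ n, ContDiff ℝ 1 (u n) ∧ HasCompactSupport (u n)) ∧
      MemLp w p μ ∧ 0 < μ {x | w x ≠ 0} ∧
      Tendsto (fun n => eLpNorm (u n) q μ) atTop (𝓝 0) ∧
      Tendsto (fun n => eLpNorm (fun x => deriv (u n) x - w x) p μ) atTop (𝓝 0) :=
  stmt15_general K hKc hKtd hKpos μ hμ p q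
end
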